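/- arXiv:0904.4131 — 3 statements merged into one kernel-verified Lean document; each statement's English description precedes it below -/
import Mathlib

section
/- Optimal strategy for the generalized AFS model, Version 2 (Theorem 1 of the paper): Assume the resilience function ρ̄ satisfies k ≤ ρ̄ ≤ K with 0 < k < K and 1 − τρ̄′(x)x > 0 for all x ∈ ℝ, assume that the shape function satisfies x² · inf{f(y) : y between ā(x)x and x} → ∞ as |x| → ∞, and assume that the function h₂(x) := x·[f(x) − ā(x)²f(ā(x)x)(1 − τρ̄′(x)x)] / [f(x) − ā(x)f(ā(x)x)(1 − τρ̄′(x)x)] is one-to-one. Then the cost functional C⁽²⁾ has a unique minimizer ξ = (ξ₀,…,ξ_N) on the set Ξ = {x ∈ ℝ^{N+1} : ∑ₙ xₙ = X₀}. The initial order ξ₀ is the unique solution of F⁻¹(X₀ − N[ξ₀ − F(ā(F⁻¹(ξ₀))·F⁻¹(ξ₀))]) = h₂(F⁻¹(ξ₀)); the intermediate orders satisfy ξ₁ = … = ξ_{N−1} = ξ₀ − F(ā(F⁻¹(ξ₀))·F⁻¹(ξ₀)); the final order is ξ_N = X₀ − ∑_{n=0}^{N−1} ξₙ; and all components are strictly positive: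 ξₙ > 0 for all n. -/
/-!
Write `g(d) = ā(d) d` (`decay`) for the decay between two trades and pass to the post-trade
levels `δₙ = Dₙ⁺` (`postTrade`). Since `xₙ = F(δₙ) - F(g(δₙ₋₁))`, on `Ξ` the last level is
fixed by `F(δ_N) = X₀ - ∑_{n<N} ψ(δₙ)` and the cost telescopes to
`J(δ) = G(X₀ - ∑_{n<N} ψ(δₙ)) + ∑_{n<N} φ(δₙ)` (`reducedCost`), where
`ψ(d) = F(d) - F(g d)` (`decayVolume`) and `φ(d) = F̃(d) - F̃(g d)` (`decayCost`); so
minimising `C⁽²⁾` on `Ξ` is minimising `J` on `ℝᴺ`.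
The growth condition on `f` gives `φ(d) ≥ c d² inf f`, so `J` is coercive and has a minimiser.

Write `h₂(d) = d · num(d) / den(d)` (`h2Num`, `h2Den`). As `G' = F⁻¹`, `ψ' = den` and
`φ'(d) = d · num(d)`, the vanishing of the partial derivatives of `J` at a minimiser reads
`h₂(δₙ) = F⁻¹(X₀ - ∑ ψ)` for all `n`, and injectivity of `h₂` forces all `δₙ` to equal one
level `d` with `F⁻¹(X₀ - N ψ(d)) = h₂(d)`. A zero of `den` would be a second zero of `h₂`,
so `den > 0`; hence `ψ` increases, and `h₂`, being continuous, injective and above the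
identity on `(0, ∞)`, is strictly increasing. So that equation has a single root, which gives
uniqueness, and comparing with `d = 0` shows `d > 0`, whence every order is positive.
-/

open Real Filter Finset

/-- `Fi f x = F(x) = ∫₀ˣ f(y) dy`. -/
noncomputable def Fi (f : ℝ → ℝ) (x : ℝ) : ℝ := ∫ y in (0:ℝ)..x, f y

/-- `Ft f x = F̃(x) = ∫₀ˣ y f(y) dy`. -/
noncomputable def Ft (f : ℝ → ℝ) (x : ℝ) : ℝ := ∫ y in (0:ℝ)..x, y * f y

/-- `Gf f Finv = G = F̃ ∘ F⁻¹`. -/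
noncomputable def Gf (f Finv : ℝ → ℝ) (x : ℝ) : ℝ := Ft f (Finv x)

/-- `ab τ ρ x = ā(x) = exp(−τ ρ̄(x))`. -/
noncomputable def ab (τ : ℝ) (ρ : ℝ → ℝ) (x : ℝ) : ℝ := Real.exp (-(τ * ρ x))

/-- Version 2 dynamics: `D₀ = 0`, `Dₙ⁺ = F⁻¹(F(Dₙ) + xₙ)`, `D_{n+1} = ā(Dₙ⁺)·Dₙ⁺`. -/
noncomputable def Dv (f Finv : ℝ → ℝ) (τ : ℝ) (ρ : ℝ → ℝ) (x : ℕ → ℝ) : ℕ → ℝ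
  | 0 => 0
  | n + 1 =>
      ab τ ρ (Finv (Fi f (Dv f Finv τ ρ x n) + x n)) * Finv (Fi f (Dv f Finv τ ρ x n) + x n)

/-- Version 2 cost functional `C⁽²⁾`. -/
noncomputable def C2 (f Finv : ℝ → ℝ) (τ : ℝ) (ρ : ℝ → ℝ) (N : ℕ) (x : ℕ → ℝ) : ℝ :=
  ∑ n ∈ Finset.range (N + 1),
    (Gf f Finv (x n + Fi f (Dv f Finv τ ρ x n)) - Ft f (Dv f Finv τ ρ x n))

/-- The function `h₂` of the generalized AFS model, Version 2. -/
noncomputable def h2 (f : ℝ → ℝ) (τ : ℝ) (ρ : ℝ → ℝ) (x : ℝ) : ℝ :=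
  x * ((f x - (ab τ ρ x) ^ 2 * f (ab τ ρ x * x) * (1 - τ * deriv ρ x * x)) /
    (f x - ab τ ρ x * f (ab τ ρ x * x) * (1 - τ * deriv ρ x * x)))

theorem sub_mul_le_intervalIntegral {h : ℝ → ℝ} {a b c : ℝ} (hab : a ≤ b) (hh : Continuous h)
    (hc : ∀ y ∈ Set.Icc a b, c ≤ h y) : (b - a) * c ≤ ∫ y in a..b, h y := by
  simpa using intervalIntegral.integral_mono_on (μ := MeasureTheory.volume) hab
    (continuous_const.intervalIntegrable a b) (hh.intervalIntegrable a b) hc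

theorem sInf_image_uIcc_le {f : ℝ → ℝ} (hf : Continuous f) {a b y : ℝ} (hy : y ∈ Set.uIcc a b) :
    sInf (f '' Set.uIcc a b) ≤ f y :=
  csInf_le (isCompact_uIcc.image hf).bddBelow (Set.mem_image_of_mem f hy)

theorem sInf_image_uIcc_pos {f : ℝ → ℝ} (hf : Continuous f) (hfpos : ∀ x, 0 < f x) (a b : ℝ) :
    0 < sInf (f '' Set.uIcc a b) := by
  obtain ⟨y, -, hy⟩ := (isCompact_uIcc.image hf).sInf_mem (Set.nonempty_uIcc.image f)
  exact hy ▸ hfpos y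

theorem tendsto_cocompact_pi_of_le {ι X β : Type*} [TopologicalSpace X] [Preorder β]
    {J : (ι → X) → β} {φ : X → β} (hφ : Tendsto φ (cocompact X) atTop)
    (hJ : ∀ δ i, φ (δ i) ≤ J δ) : Tendsto J (cocompact (ι → X)) atTop := by
  rw [← Filter.coprodᵢ_cocompact, Filter.coprodᵢ, tendsto_iSup]
  exact fun i => tendsto_atTop_mono (fun δ => hJ δ i) (hφ.comp tendsto_comap)

theorem hasDerivAt_sum_update {ι : Type*} [Fintype ι] [DecidableEq ι] {u : ℝ → ℝ} {u' : ℝ}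
    (δ : ι → ℝ) (i : ι) (hu : HasDerivAt u u' (δ i)) :
    HasDerivAt (fun t => ∑ j, u (Function.update δ i t j)) u' (δ i) := by
  have h (t : ℝ) : ∑ j, u (Function.update δ i t j) = u t + ∑ j ∈ univ \ {i}, u (δ j) := by
    simp_rw [Function.apply_update (fun _ => u)]
    exact sum_update_of_mem (mem_univ i) _ _
  simpa only [h] using hu.add_const _

theorem eq_of_antitone_of_strictMono {α β : Type*} [LinearOrder α] [Preorder β] {u v : α → β}
    (hu : Antitone u) (hv : StrictMono v) {a b : α} (ha : u a = v a) (hb : u b = v b) :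
    a = b :=
  le_antisymm (not_lt.1 fun h => (hv h).not_ge (hb ▸ ha ▸ hu h.le))
    (not_lt.1 fun h => (hv h).not_ge (ha ▸ hb ▸ hu h.le))

section Antiderivative

variable {f Finv : ℝ → ℝ}

theorem hasDerivAt_Fi (hf : Continuous f) (x : ℝ) : HasDerivAt (Fi f) (f x) x :=
  intervalIntegral.integral_hasDerivAt_right (hf.intervalIntegrable 0 x)
    (hf.stronglyMeasurableAtFilter _ _) hf.continuousAt

theorem hasDerivAt_Ft (hf : Continuous f) (x : ℝ) : HasDerivAt (Ft f) (x * f x) x :=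
  hasDerivAt_Fi (continuous_id.mul hf) x

@[simp] theorem Fi_zero : Fi f 0 = 0 := intervalIntegral.integral_same

@[simp] theorem Ft_zero : Ft f 0 = 0 := intervalIntegral.integral_same

theorem Fi_strictMono (hf : Continuous f) (hfpos : ∀ x, 0 < f x) : StrictMono (Fi f) :=
  strictMono_of_hasDerivAt_pos (hasDerivAt_Fi hf) hfpos

theorem Ft_nonneg (hfpos : ∀ x, 0 < f x) (x : ℝ) : 0 ≤ Ft f x := by
  rcases le_total 0 x with hx | hx
  · exact intervalIntegral.integral_nonneg hx fun y hy => mul_nonneg hy.1 (hfpos y).le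
  · rw [Ft, intervalIntegral.integral_symm, ← intervalIntegral.integral_neg]
    exact intervalIntegral.integral_nonneg hx fun y hy =>
      neg_nonneg.2 (mul_nonpos_of_nonpos_of_nonneg hy.2 (hfpos y).le)

theorem Finv_strictMono (hf : Continuous f) (hfpos : ∀ x, 0 < f x)
    (hFinv₁ : ∀ x, Fi f (Finv x) = x) : StrictMono Finv :=
  ((Fi_strictMono hf hfpos).orderIsoOfRightInverse _ Finv hFinv₁).symm.strictMono

theorem Finv_continuous (hf : Continuous f) (hfpos : ∀ x, 0 < f x)
    (hFinv₁ : ∀ x, Fi f (Finv x) = x) : Continuous Finv :=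
  ((Fi_strictMono hf hfpos).orderIsoOfRightInverse _ Finv hFinv₁).symm.continuous

theorem hasDerivAt_Gf (hf : Continuous f) (hfpos : ∀ x, 0 < f x)
    (hFinv₁ : ∀ x, Fi f (Finv x) = x) (x : ℝ) : HasDerivAt (Gf f Finv) (Finv x) x := by
  have hFinv : HasDerivAt Finv (f (Finv x))⁻¹ x :=
    .of_local_left_inverse (Finv_continuous hf hfpos hFinv₁).continuousAt
      (hasDerivAt_Fi hf (Finv x)) (hfpos _).ne' (.of_forall hFinv₁)
  refine ((hasDerivAt_Ft hf (Finv x)).comp x hFinv).congr_deriv ?_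
  rw [mul_assoc, mul_inv_cancel₀ (hfpos _).ne', mul_one]

end Antiderivative

section Decay

variable {τ : ℝ} {ρ : ℝ → ℝ} {d : ℝ}

theorem ab_pos (τ : ℝ) (ρ : ℝ → ℝ) (x : ℝ) : 0 < ab τ ρ x := exp_pos _

theorem ab_lt_one {x : ℝ} (h : 0 < τ * ρ x) : ab τ ρ x < 1 :=
  exp_lt_one_iff.2 (neg_neg_of_pos h)

noncomputable def decay (τ : ℝ) (ρ : ℝ → ℝ) (d : ℝ) : ℝ := ab τ ρ d * d

@[simp] theorem decay_zero : decay τ ρ 0 = 0 := mul_zero _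

theorem decay_lt_self (hab : ab τ ρ d < 1) (hd : 0 < d) : decay τ ρ d < d :=
  mul_lt_of_lt_one_left hd hab

theorem hasDerivAt_decay (hρ : DifferentiableAt ℝ ρ d) :
    HasDerivAt (decay τ ρ) (ab τ ρ d * (1 - τ * deriv ρ d * d)) d := by
  have hab : HasDerivAt (ab τ ρ) (ab τ ρ d * -(τ * deriv ρ d)) d :=
    (hρ.hasDerivAt.const_mul τ).neg.exp
  refine (hab.mul (hasDerivAt_id d)).congr_deriv ?_
  simp only [id]
  ring

end Decay

section H2

variable {f : ℝ → ℝ} {τ : ℝ} {ρ : ℝ → ℝ} {d : ℝ}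

noncomputable def h2Num (f : ℝ → ℝ) (τ : ℝ) (ρ : ℝ → ℝ) (d : ℝ) : ℝ :=
  f d - ab τ ρ d ^ 2 * f (decay τ ρ d) * (1 - τ * deriv ρ d * d)

noncomputable def h2Den (f : ℝ → ℝ) (τ : ℝ) (ρ : ℝ → ℝ) (d : ℝ) : ℝ :=
  f d - ab τ ρ d * f (decay τ ρ d) * (1 - τ * deriv ρ d * d)

theorem h2_eq_mul_div : h2 f τ ρ d = d * (h2Num f τ ρ d / h2Den f τ ρ d) := rfl

@[simp] theorem h2_zero : h2 f τ ρ 0 = 0 := zero_mul _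

theorem continuous_h2Den (hf : Continuous f) (hρ : ContDiff ℝ 1 ρ) :
    Continuous (h2Den f τ ρ) := by
  have hρ' := hρ.continuous_deriv le_rfl
  have hρ := hρ.continuous
  unfold h2Den decay ab
  fun_prop

theorem h2Den_zero_pos (hfpos : ∀ x, 0 < f x) (hab : ab τ ρ 0 < 1) : 0 < h2Den f τ ρ 0 := by
  simp only [h2Den, decay_zero, mul_zero, sub_zero, mul_one]
  nlinarith [hfpos 0]

theorem h2Den_ne_zero (hfpos : ∀ x, 0 < f x) (hab : ab τ ρ 0 < 1)
    (hh2 : Function.Injective (h2 f τ ρ)) (d : ℝ) : h2Den f τ ρ d ≠ 0 := by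
  intro hd
  obtain rfl : d = 0 := hh2 (by rw [h2_eq_mul_div, hd, div_zero, mul_zero, h2_zero])
  exact (h2Den_zero_pos hfpos hab).ne' hd

theorem h2Den_pos (hf : Continuous f) (hρ : ContDiff ℝ 1 ρ) (hfpos : ∀ x, 0 < f x)
    (hab : ab τ ρ 0 < 1) (hh2 : Function.Injective (h2 f τ ρ)) (d : ℝ) : 0 < h2Den f τ ρ d := by
  by_contra! hd
  obtain ⟨c, -, hc⟩ := intermediate_value_uIcc (continuous_h2Den hf hρ).continuousOn
    (Set.mem_uIcc.2 (Or.inr ⟨hd, (h2Den_zero_pos hfpos hab).le⟩))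
  exact h2Den_ne_zero hfpos hab hh2 c hc

theorem h2Den_lt_h2Num (hfpos : ∀ x, 0 < f x) (hab : ab τ ρ d < 1)
    (hρ' : 0 < 1 - τ * deriv ρ d * d) : h2Den f τ ρ d < h2Num f τ ρ d := by
  have := mul_pos (mul_pos (mul_pos (ab_pos τ ρ d) (sub_pos.2 hab)) (hfpos (decay τ ρ d))) hρ'
  unfold h2Den h2Num
  nlinarith

theorem continuous_h2 (hf : Continuous f) (hρ : ContDiff ℝ 1 ρ) (hfpos : ∀ x, 0 < f x)
    (hab : ab τ ρ 0 < 1) (hh2 : Function.Injective (h2 f τ ρ)) : Continuous (h2 f τ ρ) := by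
  have hρ' := hρ.continuous_deriv le_rfl
  have hρ := hρ.continuous
  have hden := h2Den_ne_zero hfpos hab hh2
  unfold h2
  exact continuous_id.mul (.div (by unfold ab; fun_prop) (by unfold ab; fun_prop) hden)

theorem lt_h2_self (hf : Continuous f) (hρ : ContDiff ℝ 1 ρ) (hfpos : ∀ x, 0 < f x)
    (hab : ∀ x, ab τ ρ x < 1) (hρ' : ∀ x, 0 < 1 - τ * deriv ρ x * x)
    (hh2 : Function.Injective (h2 f τ ρ)) (hd : 0 < d) : d < h2 f τ ρ d := by
  rw [h2_eq_mul_div]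
  exact lt_mul_of_one_lt_right hd ((one_lt_div (h2Den_pos hf hρ hfpos (hab 0) hh2 d)).2
    (h2Den_lt_h2Num hfpos (hab d) (hρ' d)))

theorem h2_strictMono (hf : Continuous f) (hρ : ContDiff ℝ 1 ρ) (hfpos : ∀ x, 0 < f x)
    (hab : ∀ x, ab τ ρ x < 1) (hρ' : ∀ x, 0 < 1 - τ * deriv ρ x * x)
    (hh2 : Function.Injective (h2 f τ ρ)) : StrictMono (h2 f τ ρ) := by
  refine ((continuous_h2 hf hρ hfpos (hab 0) hh2).strictMono_of_inj hh2).resolve_right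
    fun hanti => ?_
  have h10 := hanti zero_lt_one
  have h11 := lt_h2_self hf hρ hfpos hab hρ' hh2 zero_lt_one
  rw [h2_zero] at h10
  linarith

end H2

section DecayVolume

variable {f : ℝ → ℝ} {τ : ℝ} {ρ : ℝ → ℝ} {d : ℝ}

noncomputable def decayVolume (f : ℝ → ℝ) (τ : ℝ) (ρ : ℝ → ℝ) (d : ℝ) : ℝ :=
  Fi f d - Fi f (decay τ ρ d)

noncomputable def decayCost (f : ℝ → ℝ) (τ : ℝ) (ρ : ℝ → ℝ) (d : ℝ) : ℝ :=
  Ft f d - Ft f (decay τ ρ d)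

@[simp] theorem decayVolume_zero : decayVolume f τ ρ 0 = 0 := by simp [decayVolume]

theorem hasDerivAt_decayVolume (hf : Continuous f) (hρ : Differentiable ℝ ρ) (d : ℝ) :
    HasDerivAt (decayVolume f τ ρ) (h2Den f τ ρ d) d := by
  refine ((hasDerivAt_Fi hf d).sub
    ((hasDerivAt_Fi hf (decay τ ρ d)).comp d (hasDerivAt_decay (hρ d)))).congr_deriv ?_
  unfold h2Den
  ring

theorem hasDerivAt_decayCost (hf : Continuous f) (hρ : Differentiable ℝ ρ) (d : ℝ) :
    HasDerivAt (decayCost f τ ρ) (d * h2Num f τ ρ d) d := by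
  refine ((hasDerivAt_Ft hf d).sub
    ((hasDerivAt_Ft hf (decay τ ρ d)).comp d (hasDerivAt_decay (hρ d)))).congr_deriv ?_
  unfold h2Num decay
  ring

theorem decayVolume_strictMono (hf : Continuous f) (hρ : ContDiff ℝ 1 ρ) (hfpos : ∀ x, 0 < f x)
    (hab : ab τ ρ 0 < 1) (hh2 : Function.Injective (h2 f τ ρ)) :
    StrictMono (decayVolume f τ ρ) :=
  strictMono_of_hasDerivAt_pos (hasDerivAt_decayVolume hf (hρ.differentiable one_ne_zero))
    (h2Den_pos hf hρ hfpos hab hh2)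

theorem decayVolume_Finv {Finv : ℝ → ℝ} (hFinv₁ : ∀ x, Fi f (Finv x) = x) (z : ℝ) :
    decayVolume f τ ρ (Finv z) = z - Fi f (ab τ ρ (Finv z) * Finv z) := by
  rw [decayVolume, hFinv₁, decay]

theorem decayCost_eq_integral (hf : Continuous f) (d : ℝ) :
    decayCost f τ ρ d = ∫ y in decay τ ρ d..d, y * f y :=
  intervalIntegral.integral_interval_sub_left (μ := MeasureTheory.volume)
    ((continuous_id.mul hf).intervalIntegrable _ _) ((continuous_id.mul hf).intervalIntegrable _ _)

theorem mul_le_decayCost (hf : Continuous f) (hfpos : ∀ x, 0 < f x) (hab : ab τ ρ d < 1) :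
    ab τ ρ d * (1 - ab τ ρ d) * (d ^ 2 * sInf (f '' Set.uIcc (decay τ ρ d) d)) ≤
      decayCost f τ ρ d := by
  have hm := sInf_image_uIcc_pos hf hfpos (decay τ ρ d) d
  have hmf : ∀ y ∈ Set.uIcc (decay τ ρ d) d, sInf (f '' Set.uIcc (decay τ ρ d) d) ≤ f y :=
    fun y hy => sInf_image_uIcc_le hf hy
  have ha := ab_pos τ ρ d
  rw [decayCost_eq_integral hf]
  set m := sInf (f '' Set.uIcc (decay τ ρ d) d)
  set a := ab τ ρ d
  have hdecay : decay τ ρ d = a * d := rfl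
  rw [hdecay] at hmf ⊢
  rcases lt_trichotomy d 0 with hd | rfl | hd
  · have hle : d ≤ a * d := by nlinarith
    have key := sub_mul_le_intervalIntegral (h := fun y => -(y * f y)) (c := -(a * d * m)) hle
      (by fun_prop) fun y hy => by
        have hfy := hmf y (Set.uIcc_of_ge hle ▸ hy)
        have hy0 : y ≤ 0 := by nlinarith [hy.2]
        nlinarith [mul_nonneg (neg_nonneg.2 hy0) (sub_nonneg.2 hfy),
          mul_nonneg (sub_nonneg.2 hy.2) hm.le]
    rw [intervalIntegral.integral_neg, ← intervalIntegral.integral_symm] at key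
    linarith [show (a * d - d) * -(a * d * m) = a * (1 - a) * (d ^ 2 * m) by ring]
  · simp
  · have hle : a * d ≤ d := by nlinarith
    have key := sub_mul_le_intervalIntegral (h := fun y => y * f y) (c := a * d * m) hle
      (by fun_prop) fun y hy => by
        have hfy := hmf y (Set.uIcc_of_le hle ▸ hy)
        have hy0 : 0 ≤ y := by nlinarith [hy.1]
        nlinarith [mul_nonneg hy0 (sub_nonneg.2 hfy), mul_nonneg (sub_nonneg.2 hy.1) hm.le]
    linarith [show (d - a * d) * (a * d * m) = a * (1 - a) * (d ^ 2 * m) by ring]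

theorem decayCost_nonneg (hf : Continuous f) (hfpos : ∀ x, 0 < f x) (hab : ab τ ρ d < 1) :
    0 ≤ decayCost f τ ρ d := by
  have := sInf_image_uIcc_pos hf hfpos (decay τ ρ d) d
  have := ab_pos τ ρ d
  have : 0 < 1 - ab τ ρ d := sub_pos.2 hab
  exact le_trans (by positivity) (mul_le_decayCost hf hfpos hab)

theorem tendsto_decayCost_cocompact (hf : Continuous f) (hfpos : ∀ x, 0 < f x) (hτ : 0 < τ)
    {k K : ℝ} (hk : 0 < k) (hρbd : ∀ x, k ≤ ρ x ∧ ρ x ≤ K)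
    (hfinf₁ : Tendsto (fun x : ℝ => x ^ 2 * sInf (f '' Set.uIcc (ab τ ρ x * x) x)) atTop atTop)
    (hfinf₂ : Tendsto (fun x : ℝ => x ^ 2 * sInf (f '' Set.uIcc (ab τ ρ x * x) x)) atBot atTop) :
    Tendsto (decayCost f τ ρ) (cocompact ℝ) atTop := by
  have hk₁ : exp (-(τ * k)) < 1 := exp_lt_one_iff.2 (by nlinarith)
  have hc : 0 < exp (-(τ * K)) * (1 - exp (-(τ * k))) := mul_pos (exp_pos _) (by linarith)
  have hbound (x : ℝ) : exp (-(τ * K)) * (1 - exp (-(τ * k))) *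
      (x ^ 2 * sInf (f '' Set.uIcc (ab τ ρ x * x) x)) ≤ decayCost f τ ρ x := by
    have haK : exp (-(τ * K)) ≤ ab τ ρ x := exp_le_exp.2 (by nlinarith [(hρbd x).2])
    have hak : ab τ ρ x ≤ exp (-(τ * k)) := exp_le_exp.2 (by nlinarith [(hρbd x).1])
    refine le_trans (mul_le_mul_of_nonneg_right ?_ ?_) (mul_le_decayCost hf hfpos ?_)
    · exact mul_le_mul haK (by linarith) (by linarith) (ab_pos τ ρ x).le
    · exact mul_nonneg (sq_nonneg x) (sInf_image_uIcc_pos hf hfpos _ _).le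
    · exact hak.trans_lt hk₁
  rw [cocompact_eq_atBot_atTop]
  exact tendsto_atTop_mono hbound ((tendsto_sup.2 ⟨hfinf₂, hfinf₁⟩).const_mul_atTop hc)

end DecayVolume

section ReducedCost

variable {ι : Type*} [Fintype ι] {f Finv : ℝ → ℝ} {τ : ℝ} {ρ : ℝ → ℝ} {X₀ : ℝ}

noncomputable def reducedCost (f Finv : ℝ → ℝ) (τ : ℝ) (ρ : ℝ → ℝ) (X₀ : ℝ) (δ : ι → ℝ) : ℝ :=
  Gf f Finv (X₀ - ∑ i, decayVolume f τ ρ (δ i)) + ∑ i, decayCost f τ ρ (δ i)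

theorem continuous_reducedCost (hf : Continuous f) (hfpos : ∀ x, 0 < f x)
    (hFinv₁ : ∀ x, Fi f (Finv x) = x) (hρ : Differentiable ℝ ρ) :
    Continuous (reducedCost f Finv τ ρ X₀ : (ι → ℝ) → ℝ) := by
  have hG : Continuous (Gf f Finv) := continuous_iff_continuousAt.2 fun x =>
    (hasDerivAt_Gf hf hfpos hFinv₁ x).continuousAt
  have hψ : Continuous (decayVolume f τ ρ) := continuous_iff_continuousAt.2 fun x =>
    (hasDerivAt_decayVolume hf hρ x).continuousAt
  have hφ : Continuous (decayCost f τ ρ) := continuous_iff_continuousAt.2 fun x =>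
    (hasDerivAt_decayCost hf hρ x).continuousAt
  unfold reducedCost
  fun_prop

theorem exists_forall_reducedCost_le (hf : Continuous f) (hfpos : ∀ x, 0 < f x)
    (hFinv₁ : ∀ x, Fi f (Finv x) = x) (hρ : Differentiable ℝ ρ) (hab : ∀ x, ab τ ρ x < 1)
    (hφ : Tendsto (decayCost f τ ρ) (cocompact ℝ) atTop) :
    ∃ δ : ι → ℝ, ∀ δ' : ι → ℝ, reducedCost f Finv τ ρ X₀ δ ≤ reducedCost f Finv τ ρ X₀ δ' := by
  refine (continuous_reducedCost hf hfpos hFinv₁ hρ).exists_forall_le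
    (tendsto_cocompact_pi_of_le hφ fun (δ : ι → ℝ) i => ?_)
  have hG := Ft_nonneg hfpos (Finv (X₀ - ∑ j, decayVolume f τ ρ (δ j)))
  have hsum := single_le_sum (fun j _ => decayCost_nonneg hf hfpos (hab (δ j))) (mem_univ i)
  unfold reducedCost Gf
  linarith

theorem h2_eq_Finv_of_isMin (hf : Continuous f) (hfpos : ∀ x, 0 < f x)
    (hFinv₁ : ∀ x, Fi f (Finv x) = x) (hρ : ContDiff ℝ 1 ρ) (hab : ab τ ρ 0 < 1)
    (hh2 : Function.Injective (h2 f τ ρ)) {δ : ι → ℝ}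
    (hmin : ∀ δ' : ι → ℝ, reducedCost f Finv τ ρ X₀ δ ≤ reducedCost f Finv τ ρ X₀ δ') (i : ι) :
    h2 f τ ρ (δ i) = Finv (X₀ - ∑ j, decayVolume f τ ρ (δ j)) := by
  classical
  have hρ₁ := hρ.differentiable one_ne_zero
  have hderiv : HasDerivAt (fun t => reducedCost f Finv τ ρ X₀ (Function.update δ i t))
      (Finv (X₀ - ∑ j, decayVolume f τ ρ (δ j)) * -h2Den f τ ρ (δ i) +
        δ i * h2Num f τ ρ (δ i)) (δ i) := by
    have hψ := (hasDerivAt_sum_update δ i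
      (hasDerivAt_decayVolume (τ := τ) hf hρ₁ (δ i))).const_sub X₀
    have hφ := hasDerivAt_sum_update δ i (hasDerivAt_decayCost (τ := τ) hf hρ₁ (δ i))
    have h := ((hasDerivAt_Gf hf hfpos hFinv₁ _).comp (δ i) hψ).add hφ
    rw [Function.update_eq_self] at h
    exact h
  have hlocal : IsLocalMin (fun t => reducedCost f Finv τ ρ X₀ (Function.update δ i t)) (δ i) :=
    .of_forall fun t => by simpa only [Function.update_eq_self] using hmin _
  have hcrit := hlocal.hasDerivAt_eq_zero hderiv
  rw [h2_eq_mul_div, mul_div_assoc', div_eq_iff (h2Den_pos hf hρ hfpos hab hh2 _).ne']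
  linarith

end ReducedCost

section LevelEquation

variable {ι : Type*} [Fintype ι] {f Finv : ℝ → ℝ} {τ : ℝ} {ρ : ℝ → ℝ} {X₀ : ℝ}

theorem eq_of_isMin_reducedCost (hf : Continuous f) (hfpos : ∀ x, 0 < f x)
    (hFinv₁ : ∀ x, Fi f (Finv x) = x) (hρ : ContDiff ℝ 1 ρ) (hab : ab τ ρ 0 < 1)
    (hh2 : Function.Injective (h2 f τ ρ)) {δ : ι → ℝ}
    (hmin : ∀ δ' : ι → ℝ, reducedCost f Finv τ ρ X₀ δ ≤ reducedCost f Finv τ ρ X₀ δ') (i j : ι) :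
    δ i = δ j :=
  hh2 (by rw [h2_eq_Finv_of_isMin hf hfpos hFinv₁ hρ hab hh2 hmin i,
    h2_eq_Finv_of_isMin hf hfpos hFinv₁ hρ hab hh2 hmin j])

theorem levelEquation_of_isMin (hf : Continuous f) (hfpos : ∀ x, 0 < f x)
    (hFinv₁ : ∀ x, Fi f (Finv x) = x) (hρ : ContDiff ℝ 1 ρ) (hab : ab τ ρ 0 < 1)
    (hh2 : Function.Injective (h2 f τ ρ)) {δ : ι → ℝ}
    (hmin : ∀ δ' : ι → ℝ, reducedCost f Finv τ ρ X₀ δ ≤ reducedCost f Finv τ ρ X₀ δ') (i : ι) :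
    Finv (X₀ - Fintype.card ι * decayVolume f τ ρ (δ i)) = h2 f τ ρ (δ i) := by
  rw [h2_eq_Finv_of_isMin hf hfpos hFinv₁ hρ hab hh2 hmin i, ← card_univ, ← nsmul_eq_mul,
    ← sum_const]
  congr 2
  exact sum_congr rfl fun j _ => by rw [eq_of_isMin_reducedCost hf hfpos hFinv₁ hρ hab hh2 hmin j i]

theorem levelEquation_unique (hf : Continuous f) (hfpos : ∀ x, 0 < f x)
    (hFinv₁ : ∀ x, Fi f (Finv x) = x) (hρ : ContDiff ℝ 1 ρ) (hab : ∀ x, ab τ ρ x < 1)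
    (hρ' : ∀ x, 0 < 1 - τ * deriv ρ x * x) (hh2 : Function.Injective (h2 f τ ρ))
    {n : ℝ} (hn : 0 ≤ n) {d₁ d₂ : ℝ} (h₁ : Finv (X₀ - n * decayVolume f τ ρ d₁) = h2 f τ ρ d₁)
    (h₂ : Finv (X₀ - n * decayVolume f τ ρ d₂) = h2 f τ ρ d₂) : d₁ = d₂ := by
  have hψ := (decayVolume_strictMono hf hρ hfpos (hab 0) hh2).monotone
  refine eq_of_antitone_of_strictMono (u := fun d => Finv (X₀ - n * decayVolume f τ ρ d))
    (fun a b hle => ?_) (h2_strictMono hf hρ hfpos hab hρ' hh2) h₁ h₂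
  exact (Finv_strictMono hf hfpos hFinv₁).monotone
    (sub_le_sub_left (mul_le_mul_of_nonneg_left (hψ hle) hn) X₀)

theorem pos_of_levelEquation (hf : Continuous f) (hfpos : ∀ x, 0 < f x)
    (hFinv₁ : ∀ x, Fi f (Finv x) = x) (hρ : ContDiff ℝ 1 ρ) (hab : ∀ x, ab τ ρ x < 1)
    (hρ' : ∀ x, 0 < 1 - τ * deriv ρ x * x) (hh2 : Function.Injective (h2 f τ ρ))
    (hX₀ : 0 < X₀) {n : ℝ} (hn : 0 ≤ n) {d : ℝ}
    (hd : Finv (X₀ - n * decayVolume f τ ρ d) = h2 f τ ρ d) : 0 < d := by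
  by_contra! hd₀
  have hψ : decayVolume f τ ρ d ≤ 0 := by
    simpa using (decayVolume_strictMono hf hρ hfpos (hab 0) hh2).monotone hd₀
  have hh : h2 f τ ρ d ≤ 0 := by simpa using (h2_strictMono hf hρ hfpos hab hρ' hh2).monotone hd₀
  have hF : Fi f (h2 f τ ρ d) ≤ 0 := by simpa using (Fi_strictMono hf hfpos).monotone hh
  rw [← hd, hFinv₁] at hF
  nlinarith

theorem exists_levelEquation_isMin [Nonempty ι] (hf : Continuous f) (hfpos : ∀ x, 0 < f x)
    (hFinv₁ : ∀ x, Fi f (Finv x) = x) (hρ : ContDiff ℝ 1 ρ) (hab : ∀ x, ab τ ρ x < 1)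
    (hh2 : Function.Injective (h2 f τ ρ)) (hφ : Tendsto (decayCost f τ ρ) (cocompact ℝ) atTop) :
    ∃ d, Finv (X₀ - Fintype.card ι * decayVolume f τ ρ d) = h2 f τ ρ d ∧
      ∀ δ' : ι → ℝ, reducedCost f Finv τ ρ X₀ (fun _ : ι => d) ≤ reducedCost f Finv τ ρ X₀ δ' := by
  obtain ⟨δ, hδ⟩ := exists_forall_reducedCost_le (ι := ι) (X₀ := X₀) hf hfpos hFinv₁
    (hρ.differentiable one_ne_zero) hab hφ
  obtain ⟨i⟩ := ‹Nonempty ι›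
  have hconst : δ = fun _ => δ i :=
    funext fun j => eq_of_isMin_reducedCost hf hfpos hFinv₁ hρ (hab 0) hh2 hδ j i
  exact ⟨δ i, levelEquation_of_isMin hf hfpos hFinv₁ hρ (hab 0) hh2 hδ i, hconst ▸ hδ⟩

theorem eq_of_isMin_reducedCost_of_levelEquation (hf : Continuous f) (hfpos : ∀ x, 0 < f x)
    (hFinv₁ : ∀ x, Fi f (Finv x) = x) (hρ : ContDiff ℝ 1 ρ) (hab : ∀ x, ab τ ρ x < 1)
    (hρ' : ∀ x, 0 < 1 - τ * deriv ρ x * x) (hh2 : Function.Injective (h2 f τ ρ)) {δ : ι → ℝ}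
    (hmin : ∀ δ' : ι → ℝ, reducedCost f Finv τ ρ X₀ δ ≤ reducedCost f Finv τ ρ X₀ δ') {d : ℝ}
    (hd : Finv (X₀ - Fintype.card ι * decayVolume f τ ρ d) = h2 f τ ρ d) (i : ι) : δ i = d :=
  levelEquation_unique hf hfpos hFinv₁ hρ hab hρ' hh2 (Nat.cast_nonneg _)
    (levelEquation_of_isMin hf hfpos hFinv₁ hρ (hab 0) hh2 hmin i) hd

end LevelEquation

section Strategy

variable {f Finv : ℝ → ℝ} {τ : ℝ} {ρ : ℝ → ℝ} {X₀ : ℝ} {N : ℕ} {d : ℝ}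

noncomputable def postTrade (f Finv : ℝ → ℝ) (τ : ℝ) (ρ : ℝ → ℝ) (x : ℕ → ℝ) (n : ℕ) : ℝ :=
  Finv (Fi f (Dv f Finv τ ρ x n) + x n)

theorem Dv_succ (x : ℕ → ℝ) (n : ℕ) :
    Dv f Finv τ ρ x (n + 1) = decay τ ρ (postTrade f Finv τ ρ x n) := rfl

theorem Fi_postTrade (hFinv₁ : ∀ x, Fi f (Finv x) = x) (x : ℕ → ℝ) (n : ℕ) :
    Fi f (postTrade f Finv τ ρ x n) = Fi f (Dv f Finv τ ρ x n) + x n :=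
  hFinv₁ _

theorem sum_range_succ_eq_Fi_postTrade (hFinv₁ : ∀ x, Fi f (Finv x) = x) (x : ℕ → ℝ) (m : ℕ) :
    ∑ n ∈ range (m + 1), x n = Fi f (postTrade f Finv τ ρ x m) +
      ∑ n ∈ range m, decayVolume f τ ρ (postTrade f Finv τ ρ x n) := by
  induction m with
  | zero => simp [Fi_postTrade hFinv₁, Dv]
  | succ m ih =>
    rw [sum_range_succ, ih, sum_range_succ, Fi_postTrade hFinv₁ x (m + 1), Dv_succ, decayVolume]
    ring

theorem sum_cost_eq_Ft_postTrade (x : ℕ → ℝ) (m : ℕ) :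
    ∑ n ∈ range (m + 1),
        (Gf f Finv (x n + Fi f (Dv f Finv τ ρ x n)) - Ft f (Dv f Finv τ ρ x n)) =
      Ft f (postTrade f Finv τ ρ x m) +
        ∑ n ∈ range m, decayCost f τ ρ (postTrade f Finv τ ρ x n) := by
  have hG (n : ℕ) :
      Gf f Finv (x n + Fi f (Dv f Finv τ ρ x n)) = Ft f (postTrade f Finv τ ρ x n) := by
    rw [Gf, postTrade, add_comm]
  induction m with
  | zero => simp [hG, Dv]
  | succ m ih =>
    rw [sum_range_succ, ih, sum_range_succ, hG, Dv_succ, decayCost]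
    ring

theorem postTrade_last (hFinv₁ : ∀ x, Fi f (Finv x) = x) (hFinv₂ : ∀ x, Finv (Fi f x) = x)
    {x : ℕ → ℝ} (hx : ∑ n ∈ range (N + 1), x n = X₀) :
    postTrade f Finv τ ρ x N =
      Finv (X₀ - ∑ n ∈ range N, decayVolume f τ ρ (postTrade f Finv τ ρ x n)) := by
  rw [← hx, sum_range_succ_eq_Fi_postTrade hFinv₁, add_sub_cancel_right, hFinv₂]

theorem C2_eq_reducedCost (hFinv₁ : ∀ x, Fi f (Finv x) = x) (hFinv₂ : ∀ x, Finv (Fi f x) = x)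
    {x : ℕ → ℝ} (hx : ∑ n ∈ range (N + 1), x n = X₀) :
    C2 f Finv τ ρ N x = reducedCost f Finv τ ρ X₀ (fun i : Fin N => postTrade f Finv τ ρ x i) := by
  rw [C2, sum_cost_eq_Ft_postTrade, reducedCost, Gf,
    Fin.sum_univ_eq_sum_range (fun n => decayVolume f τ ρ (postTrade f Finv τ ρ x n)),
    Fin.sum_univ_eq_sum_range (fun n => decayCost f τ ρ (postTrade f Finv τ ρ x n)),
    ← postTrade_last hFinv₁ hFinv₂ hx]

theorem eq_of_postTrade_eq (hFinv₁ : ∀ x, Fi f (Finv x) = x) {x y : ℕ → ℝ}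
    (h : ∀ n ≤ N, postTrade f Finv τ ρ x n = postTrade f Finv τ ρ y n) : ∀ n ≤ N, x n = y n := by
  intro n hn
  have hD : Dv f Finv τ ρ x n = Dv f Finv τ ρ y n := by
    cases n with
    | zero => rfl
    | succ m => rw [Dv_succ, Dv_succ, h m (by omega)]
  have hx := Fi_postTrade (τ := τ) (ρ := ρ) hFinv₁ x n
  have hy := Fi_postTrade (τ := τ) (ρ := ρ) hFinv₁ y n
  rw [h n hn, hD] at hx
  linarith

noncomputable def strategyOfLevels (f : ℝ → ℝ) (τ : ℝ) (ρ : ℝ → ℝ) (e : ℕ → ℝ) : ℕ → ℝ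
  | 0 => Fi f (e 0)
  | n + 1 => Fi f (e (n + 1)) - Fi f (decay τ ρ (e n))

theorem postTrade_strategyOfLevels (hFinv₂ : ∀ x, Finv (Fi f x) = x) (e : ℕ → ℝ) (n : ℕ) :
    postTrade f Finv τ ρ (strategyOfLevels f τ ρ e) n = e n := by
  induction n with
  | zero => simp [postTrade, Dv, strategyOfLevels, hFinv₂]
  | succ n ih => rw [postTrade, Dv_succ, ih, strategyOfLevels, add_sub_cancel, hFinv₂]

theorem strategyOfLevels_pos (hf : Continuous f) (hfpos : ∀ x, 0 < f x)
    (hab : ∀ x, ab τ ρ x < 1) {e : ℕ → ℝ} (he : Monotone e) (he₀ : 0 < e 0) (n : ℕ) :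
    0 < strategyOfLevels f τ ρ e n := by
  have hF := Fi_strictMono hf hfpos
  cases n with
  | zero => simpa [strategyOfLevels] using hF he₀
  | succ n =>
    have hdecay := decay_lt_self (hab (e n)) (he₀.trans_le (he n.zero_le))
    exact sub_pos.2 (hF (hdecay.trans_le (he n.le_succ)))

noncomputable def optimalStrategy (f : ℝ → ℝ) (τ : ℝ) (ρ : ℝ → ℝ) (N : ℕ) (d : ℝ) : ℕ → ℝ :=
  strategyOfLevels f τ ρ fun n => if n < N then d else h2 f τ ρ d

theorem optimalStrategy_zero (hN : 0 < N) : optimalStrategy f τ ρ N d 0 = Fi f d := by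
  simp [optimalStrategy, strategyOfLevels, hN]

theorem optimalStrategy_of_lt {n : ℕ} (h₁ : 1 ≤ n) (h₂ : n < N) :
    optimalStrategy f τ ρ N d n = decayVolume f τ ρ d := by
  obtain ⟨m, rfl⟩ := Nat.exists_eq_add_of_le' h₁
  simp [optimalStrategy, strategyOfLevels, h₂, show m < N by omega, decayVolume]

theorem sum_optimalStrategy (hFinv₁ : ∀ x, Fi f (Finv x) = x) (hFinv₂ : ∀ x, Finv (Fi f x) = x)
    (hd : Finv (X₀ - N * decayVolume f τ ρ d) = h2 f τ ρ d) :
    ∑ n ∈ range (N + 1), optimalStrategy f τ ρ N d n = X₀ := by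
  rw [sum_range_succ_eq_Fi_postTrade (Finv := Finv) (τ := τ) (ρ := ρ) hFinv₁]
  simp_rw [optimalStrategy, postTrade_strategyOfLevels hFinv₂, if_neg (lt_irrefl N), ← hd, hFinv₁]
  rw [sum_congr rfl fun n hn => by rw [if_pos (mem_range.1 hn)], sum_const, card_range,
    nsmul_eq_mul]
  ring

theorem C2_optimalStrategy (hFinv₁ : ∀ x, Fi f (Finv x) = x)
    (hFinv₂ : ∀ x, Finv (Fi f x) = x) (hd : Finv (X₀ - N * decayVolume f τ ρ d) = h2 f τ ρ d) :
    C2 f Finv τ ρ N (optimalStrategy f τ ρ N d) =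
      reducedCost f Finv τ ρ X₀ (fun _ : Fin N => d) := by
  rw [C2_eq_reducedCost hFinv₁ hFinv₂ (sum_optimalStrategy hFinv₁ hFinv₂ hd)]
  congr
  funext i
  rw [optimalStrategy, postTrade_strategyOfLevels hFinv₂, if_pos i.isLt]

theorem optimalStrategy_pos (hf : Continuous f) (hfpos : ∀ x, 0 < f x) (hρ : ContDiff ℝ 1 ρ)
    (hab : ∀ x, ab τ ρ x < 1) (hρ' : ∀ x, 0 < 1 - τ * deriv ρ x * x)
    (hh2 : Function.Injective (h2 f τ ρ)) (hd : 0 < d) (n : ℕ) :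
    0 < optimalStrategy f τ ρ N d n := by
  have hdh := lt_h2_self hf hρ hfpos hab hρ' hh2 hd
  refine strategyOfLevels_pos hf hfpos hab (fun a b hle => ?_) ?_ n
  · split_ifs <;> first | exact le_rfl | exact hdh.le | omega
  · split_ifs <;> linarith

theorem eq_optimalStrategy_of_isMin (hf : Continuous f) (hfpos : ∀ x, 0 < f x)
    (hFinv₁ : ∀ x, Fi f (Finv x) = x) (hFinv₂ : ∀ x, Finv (Fi f x) = x) (hρ : ContDiff ℝ 1 ρ)
    (hab : ∀ x, ab τ ρ x < 1) (hρ' : ∀ x, 0 < 1 - τ * deriv ρ x * x)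
    (hh2 : Function.Injective (h2 f τ ρ)) (hd : Finv (X₀ - N * decayVolume f τ ρ d) = h2 f τ ρ d)
    (hdmin : ∀ δ : Fin N → ℝ,
      reducedCost f Finv τ ρ X₀ (fun _ : Fin N => d) ≤ reducedCost f Finv τ ρ X₀ δ)
    {y : ℕ → ℝ} (hy : ∑ n ∈ range (N + 1), y n = X₀)
    (hymin : ∀ z : ℕ → ℝ, ∑ n ∈ range (N + 1), z n = X₀ → C2 f Finv τ ρ N y ≤ C2 f Finv τ ρ N z) :
    ∀ n ≤ N, y n = optimalStrategy f τ ρ N d n := by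
  have hlevels (i : Fin N) : postTrade f Finv τ ρ y i = d := by
    refine eq_of_isMin_reducedCost_of_levelEquation
      (δ := fun i : Fin N => postTrade f Finv τ ρ y i) hf hfpos hFinv₁ hρ hab hρ' hh2
      (fun δ => ?_) (by simpa using hd) i
    rw [← C2_eq_reducedCost hFinv₁ hFinv₂ hy]
    calc C2 f Finv τ ρ N y ≤ C2 f Finv τ ρ N (optimalStrategy f τ ρ N d) :=
          hymin _ (sum_optimalStrategy hFinv₁ hFinv₂ hd)
      _ = reducedCost f Finv τ ρ X₀ (fun _ : Fin N => d) := C2_optimalStrategy hFinv₁ hFinv₂ hd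
      _ ≤ _ := hdmin δ
  refine eq_of_postTrade_eq (τ := τ) (ρ := ρ) hFinv₁ fun n hn => ?_
  rw [optimalStrategy, postTrade_strategyOfLevels hFinv₂]
  split_ifs with hnN
  · exact hlevels ⟨n, hnN⟩
  · rw [show n = N by omega, postTrade_last hFinv₁ hFinv₂ hy, ← hd,
      sum_congr rfl fun m hm => by rw [hlevels ⟨m, mem_range.1 hm⟩], sum_const, card_range,
      nsmul_eq_mul]

end Strategy

theorem gafs_version2_optimal_strategy_general
    (f Finv : ℝ → ℝ) (hf : Continuous f) (hfpos : ∀ x, 0 < f x)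
    (hFinv₁ : ∀ x, Fi f (Finv x) = x) (hFinv₂ : ∀ x, Finv (Fi f x) = x)
    (τ : ℝ) (hτ : 0 < τ) (ρ : ℝ → ℝ) (hρ : ContDiff ℝ 1 ρ)
    (k K : ℝ) (hk : 0 < k) (hρbd : ∀ x, k ≤ ρ x ∧ ρ x ≤ K)
    (hρ' : ∀ x, 0 < 1 - τ * deriv ρ x * x)
    (hfinf₁ : Tendsto (fun x : ℝ => x ^ 2 * sInf (f '' Set.uIcc (ab τ ρ x * x) x)) atTop atTop)
    (hfinf₂ : Tendsto (fun x : ℝ => x ^ 2 * sInf (f '' Set.uIcc (ab τ ρ x * x) x)) atBot atTop)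
    (N : ℕ) (hN : 1 ≤ N) (X₀ : ℝ) (hX₀ : 0 < X₀)
    (hh2 : Function.Injective (h2 f τ ρ)) :
    ∃ ξ : ℕ → ℝ,
      (∑ n ∈ Finset.range (N + 1), ξ n = X₀) ∧
      (∀ y : ℕ → ℝ, (∑ n ∈ Finset.range (N + 1), y n = X₀) →
        C2 f Finv τ ρ N ξ ≤ C2 f Finv τ ρ N y) ∧
      (∀ y : ℕ → ℝ, (∑ n ∈ Finset.range (N + 1), y n = X₀) →
        (∀ z : ℕ → ℝ, (∑ n ∈ Finset.range (N + 1), z n = X₀) →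
          C2 f Finv τ ρ N y ≤ C2 f Finv τ ρ N z) →
        ∀ n ≤ N, y n = ξ n) ∧
      (Finv (X₀ - (N : ℝ) * (ξ 0 - Fi f (ab τ ρ (Finv (ξ 0)) * Finv (ξ 0)))) =
        h2 f τ ρ (Finv (ξ 0))) ∧
      (∀ z : ℝ, Finv (X₀ - (N : ℝ) * (z - Fi f (ab τ ρ (Finv z) * Finv z))) =
        h2 f τ ρ (Finv z) → z = ξ 0) ∧
      (∀ n : ℕ, 1 ≤ n → n < N →
        ξ n = ξ 0 - Fi f (ab τ ρ (Finv (ξ 0)) * Finv (ξ 0))) ∧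
      (ξ N = X₀ - ∑ n ∈ Finset.range N, ξ n) ∧
      (∀ n ≤ N, 0 < ξ n) := by
  have hab (x : ℝ) : ab τ ρ x < 1 := ab_lt_one (mul_pos hτ (hk.trans_le (hρbd x).1))
  have : Nonempty (Fin N) := ⟨⟨0, hN⟩⟩
  obtain ⟨d, hd, hdmin⟩ := exists_levelEquation_isMin (ι := Fin N) (X₀ := X₀) hf hfpos hFinv₁ hρ
    hab hh2 (tendsto_decayCost_cocompact hf hfpos hτ hk hρbd hfinf₁ hfinf₂)
  rw [Fintype.card_fin] at hd
  have hd₀ := pos_of_levelEquation hf hfpos hFinv₁ hρ hab hρ' hh2 hX₀ N.cast_nonneg hd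
  have hsum := sum_optimalStrategy hFinv₁ hFinv₂ hd
  have hξ₀ : optimalStrategy f τ ρ N d 0 = Fi f d := optimalStrategy_zero hN
  refine ⟨optimalStrategy f τ ρ N d, hsum, fun y hy => ?_,
    fun y hy => eq_optimalStrategy_of_isMin hf hfpos hFinv₁ hFinv₂ hρ hab hρ' hh2 hd hdmin hy,
    ?_, fun z hz => ?_, fun n hn₁ hn₂ => ?_, ?_,
    fun n _ => optimalStrategy_pos hf hfpos hρ hab hρ' hh2 hd₀ n⟩
  · rw [C2_optimalStrategy hFinv₁ hFinv₂ hd, C2_eq_reducedCost hFinv₁ hFinv₂ hy]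
    exact hdmin _
  · rw [← decayVolume_Finv hFinv₁, hξ₀, hFinv₂]
    exact hd
  · rw [← decayVolume_Finv hFinv₁] at hz
    rw [hξ₀, ← levelEquation_unique hf hfpos hFinv₁ hρ hab hρ' hh2 N.cast_nonneg hz hd, hFinv₁]
  · rw [optimalStrategy_of_lt hn₁ hn₂, ← decayVolume_Finv hFinv₁, hξ₀, hFinv₂]
  · rw [sum_range_succ] at hsum
    linarith

/-- Optimal strategy for the generalized AFS model, Version 2. -/
theorem gafs_version2_optimal_strategy
    (f Finv : ℝ → ℝ) (hf : Continuous f) (hfpos : ∀ x, 0 < f x)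
    (htop : Tendsto (Fi f) atTop atTop) (hbot : Tendsto (Fi f) atBot atBot)
    (hFinv₁ : ∀ x, Fi f (Finv x) = x) (hFinv₂ : ∀ x, Finv (Fi f x) = x)
    (τ : ℝ) (hτ : 0 < τ) (ρ : ℝ → ℝ) (hρ : ContDiff ℝ 1 ρ)
    (k K : ℝ) (hk : 0 < k) (hkK : k < K) (hρbd : ∀ x, k ≤ ρ x ∧ ρ x ≤ K)
    (hρ' : ∀ x, 0 < 1 - τ * deriv ρ x * x)
    (hfinf₁ : Tendsto (fun x : ℝ => x ^ 2 * sInf (f '' Set.uIcc (ab τ ρ x * x) x)) atTop atTop)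
    (hfinf₂ : Tendsto (fun x : ℝ => x ^ 2 * sInf (f '' Set.uIcc (ab τ ρ x * x) x)) atBot atTop)
    (N : ℕ) (hN : 1 ≤ N) (X₀ : ℝ) (hX₀ : 0 < X₀)
    (hh2 : Function.Injective (h2 f τ ρ)) :
    ∃ ξ : ℕ → ℝ,
      (∑ n ∈ Finset.range (N + 1), ξ n = X₀) ∧
      (∀ y : ℕ → ℝ, (∑ n ∈ Finset.range (N + 1), y n = X₀) →
        C2 f Finv τ ρ N ξ ≤ C2 f Finv τ ρ N y) ∧
      (∀ y : ℕ → ℝ, (∑ n ∈ Finset.range (N + 1), y n = X₀) →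
        (∀ z : ℕ → ℝ, (∑ n ∈ Finset.range (N + 1), z n = X₀) →
          C2 f Finv τ ρ N y ≤ C2 f Finv τ ρ N z) →
        ∀ n ≤ N, y n = ξ n) ∧
      (Finv (X₀ - (N : ℝ) * (ξ 0 - Fi f (ab τ ρ (Finv (ξ 0)) * Finv (ξ 0)))) =
        h2 f τ ρ (Finv (ξ 0))) ∧
      (∀ z : ℝ, Finv (X₀ - (N : ℝ) * (z - Fi f (ab τ ρ (Finv z) * Finv z))) =
        h2 f τ ρ (Finv z) → z = ξ 0) ∧
      (∀ n : ℕ, 1 ≤ n → n < N →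
        ξ n = ξ 0 - Fi f (ab τ ρ (Finv (ξ 0)) * Finv (ξ 0))) ∧
      (ξ N = X₀ - ∑ n ∈ Finset.range N, ξ n) ∧
      (∀ n ≤ N, 0 < ξ n) :=
  gafs_version2_optimal_strategy_general f Finv hf hfpos hFinv₁ hFinv₂ τ hτ ρ hρ k K hk hρbd hρ'
    hfinf₁ hfinf₂ N hN X₀ hX₀ hh2
end

section
/- Uniqueness and positivity of the first-order candidate for Version 1 (Lemma on ĥ₁): assume ā(x)(1 − τρ̄′(x)x) < 1 for all x ∈ ℝ and that h₁ is one-to-one. Then the function ĥ₁(x) := h₁(x) − F⁻¹(X₀ − Nx(1 − ā(x))) is strictly increasing on ℝ; consequently ĥ₁ has at most one zero, and if a zero exists it is strictly positive. -/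
open Real Filter

/-- The function `h₁` of the generalized AFS model, Version 1. -/
noncomputable def h1 (Finv : ℝ → ℝ) (τ : ℝ) (ρ : ℝ → ℝ) (x : ℝ) : ℝ :=
  (Finv x - ab τ ρ x * (1 - τ * deriv ρ x * x) * Finv (ab τ ρ x * x)) /
    (1 - ab τ ρ x * (1 - τ * deriv ρ x * x))

/-- `ĥ₁(x) = h₁(x) − F⁻¹(X₀ − Nx(1 − ā(x)))`. -/
noncomputable def h1hat (Finv : ℝ → ℝ) (τ : ℝ) (ρ : ℝ → ℝ) (N : ℕ) (X₀ : ℝ) (x : ℝ) : ℝ :=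
  h1 Finv τ ρ x - Finv (X₀ - (N : ℝ) * (x * (1 - ab τ ρ x)))

/-!
Write `c(x) = ā(x)(1 − τρ̄′(x)x)`, the derivative of `x ā(x)`. Since `0 < c < 1`, the map
`s(x) = x(1 − ā(x))` has derivative `1 − c > 0`, so it is strictly increasing with `s(0) = 0`;
hence `ā(x)x < x` for `x > 0`. The identity `h₁(x) − F⁻¹(x) = c(F⁻¹(x) − F⁻¹(ā(x)x))/(1 − c)`
then gives `h₁(0) = F⁻¹(0)` and `h₁(x) > F⁻¹(x) > F⁻¹(0)` for `x > 0`. A continuous injective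
function is strictly monotone, and this comparison rules out decreasing, so `h₁` is strictly
increasing. Subtracting the antitone `F⁻¹(X₀ − N s(x))` keeps it so, and
`ĥ₁(0) = F⁻¹(0) − F⁻¹(X₀) < 0` puts any zero of `ĥ₁` to the right of `0`.
-/

theorem strictMono_intervalIntegral_of_pos {f : ℝ → ℝ} (hf : Continuous f)
    (hpos : ∀ x, 0 < f x) (a : ℝ) : StrictMono fun x => ∫ y in a..x, f y := by
  intro x y hxy
  have hsplit := intervalIntegral.integral_add_adjacent_intervals
    (hf.intervalIntegrable (μ := MeasureTheory.volume) a x) (hf.intervalIntegrable x y)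
  have hmid : 0 < ∫ t in x..y, f t :=
    intervalIntegral.intervalIntegral_pos_of_pos (hf.intervalIntegrable x y) hpos hxy
  linarith

theorem StrictMono.strictMono_of_leftInverse {α β : Type*} [LinearOrder α] [Preorder β]
    {F : α → β} {G : β → α} (hF : StrictMono F) (hG : Function.LeftInverse F G) :
    StrictMono G :=
  fun a b hab => hF.lt_iff_lt.mp (by rwa [hG a, hG b])

section h1

variable {Finv : ℝ → ℝ} {τ : ℝ} {ρ : ℝ → ℝ}

theorem hasDerivAt_mul_one_sub_ab {x : ℝ} (hρ : DifferentiableAt ℝ ρ x) :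
    HasDerivAt (fun x => x * (1 - ab τ ρ x)) (1 - ab τ ρ x * (1 - τ * deriv ρ x * x)) x := by
  have hab : HasDerivAt (ab τ ρ) (ab τ ρ x * -(τ * deriv ρ x)) x :=
    (hρ.hasDerivAt.const_mul τ).neg.exp
  have hprod : HasDerivAt (fun y => y * (1 - ab τ ρ y))
      (1 * (1 - ab τ ρ x) + x * (0 - ab τ ρ x * -(τ * deriv ρ x))) x :=
    (hasDerivAt_id' x).mul ((hasDerivAt_const x 1).sub hab)
  convert hprod using 1
  ring

theorem strictMono_mul_one_sub_ab (hρ : Differentiable ℝ ρ)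
    (hlt : ∀ x, ab τ ρ x * (1 - τ * deriv ρ x * x) < 1) :
    StrictMono fun x => x * (1 - ab τ ρ x) :=
  strictMono_of_deriv_pos fun x => by
    rw [(hasDerivAt_mul_one_sub_ab (hρ x)).deriv]
    linarith [hlt x]

theorem ab_mul_lt_self (hρ : Differentiable ℝ ρ)
    (hlt : ∀ x, ab τ ρ x * (1 - τ * deriv ρ x * x) < 1) {x : ℝ} (hx : 0 < x) :
    ab τ ρ x * x < x := by
  have hs : 0 * (1 - ab τ ρ 0) < x * (1 - ab τ ρ x) := strictMono_mul_one_sub_ab hρ hlt hx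
  nlinarith

theorem h1_sub_self {x : ℝ} (hx : ab τ ρ x * (1 - τ * deriv ρ x * x) ≠ 1) :
    h1 Finv τ ρ x - Finv x = ab τ ρ x * (1 - τ * deriv ρ x * x) *
      (Finv x - Finv (ab τ ρ x * x)) / (1 - ab τ ρ x * (1 - τ * deriv ρ x * x)) := by
  have hx' : 1 - ab τ ρ x * (1 - τ * deriv ρ x * x) ≠ 0 := sub_ne_zero.mpr hx.symm
  rw [h1]
  field_simp
  ring

theorem h1_zero (h : ab τ ρ 0 ≠ 1) : h1 Finv τ ρ 0 = Finv 0 := by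
  have := h1_sub_self (Finv := Finv) (x := 0) (by simpa using h)
  simp only [mul_zero, sub_self, zero_div] at this
  linarith

theorem h1hat_zero (h : ab τ ρ 0 ≠ 1) (N : ℕ) (X₀ : ℝ) :
    h1hat Finv τ ρ N X₀ 0 = Finv 0 - Finv X₀ := by
  simp only [h1hat, h1_zero h, zero_mul, mul_zero, sub_zero]

theorem self_lt_h1 (hFinv : StrictMono Finv) (hρ : Differentiable ℝ ρ)
    (hlt : ∀ x, ab τ ρ x * (1 - τ * deriv ρ x * x) < 1) {x : ℝ} (hx : 0 < x)
    (hρ' : 0 < 1 - τ * deriv ρ x * x) :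
    Finv x < h1 Finv τ ρ x := by
  have hgap : 0 < Finv x - Finv (ab τ ρ x * x) :=
    sub_pos.mpr (hFinv (ab_mul_lt_self hρ hlt hx))
  have hc : 0 < ab τ ρ x * (1 - τ * deriv ρ x * x) := mul_pos (exp_pos _) hρ'
  rw [← sub_pos, h1_sub_self (hlt x).ne]
  exact div_pos (mul_pos hc hgap) (sub_pos.mpr (hlt x))

theorem continuous_h1 (hFinv : Continuous Finv) (hρ : ContDiff ℝ 1 ρ)
    (hlt : ∀ x, ab τ ρ x * (1 - τ * deriv ρ x * x) ≠ 1) : Continuous (h1 Finv τ ρ) := by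
  have hab : Continuous (ab τ ρ) := (continuous_const.mul hρ.continuous).neg.rexp
  have hc : Continuous fun x => ab τ ρ x * (1 - τ * deriv ρ x * x) :=
    hab.mul (continuous_const.sub
      ((continuous_const.mul (hρ.continuous_deriv le_rfl)).mul continuous_id))
  exact (hFinv.sub (hc.mul (hFinv.comp (hab.mul continuous_id)))).div
    (continuous_const.sub hc) fun x => sub_ne_zero.mpr (hlt x).symm

theorem h1_strictMono (hFinv : StrictMono Finv) (hFinv_cont : Continuous Finv)
    (hρ : ContDiff ℝ 1 ρ) (hρ' : ∀ x, 0 < 1 - τ * deriv ρ x * x)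
    (hlt : ∀ x, ab τ ρ x * (1 - τ * deriv ρ x * x) < 1)
    (hinj : Function.Injective (h1 Finv τ ρ)) : StrictMono (h1 Finv τ ρ) := by
  have hρd : Differentiable ℝ ρ := hρ.differentiable one_ne_zero
  refine ((continuous_h1 hFinv_cont hρ fun x => (hlt x).ne).strictMono_of_inj hinj).resolve_right
    fun hanti => ?_
  refine (hanti one_pos).not_gt ?_
  calc h1 Finv τ ρ 0 = Finv 0 := h1_zero (by simpa using (hlt 0).ne)
    _ < Finv 1 := hFinv one_pos
    _ < h1 Finv τ ρ 1 := self_lt_h1 hFinv hρd hlt one_pos (hρ' 1)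

theorem h1hat_strictMono (hh1 : StrictMono (h1 Finv τ ρ)) (hFinv : Monotone Finv)
    (hs : Monotone fun x => x * (1 - ab τ ρ x)) (N : ℕ) (X₀ : ℝ) :
    StrictMono (h1hat Finv τ ρ N X₀) := fun _ _ hab =>
  (sub_lt_sub_right (hh1 hab) _).trans_le <| sub_le_sub_left (hFinv <| sub_le_sub_left
    (mul_le_mul_of_nonneg_left (hs hab.le) N.cast_nonneg) X₀) _

end h1

theorem h1hat_strictMono_unique_positive_zero_general
    (f Finv : ℝ → ℝ) (hf : Continuous f) (hfpos : ∀ x, 0 < f x)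
    (hFinv₁ : ∀ x, Fi f (Finv x) = x) (hFinv₂ : ∀ x, Finv (Fi f x) = x)
    (τ : ℝ) (ρ : ℝ → ℝ) (hρ : ContDiff ℝ 1 ρ)
    (hρ' : ∀ x, 0 < 1 - τ * deriv ρ x * x)
    (hlt : ∀ x, ab τ ρ x * (1 - τ * deriv ρ x * x) < 1)
    (N : ℕ) (X₀ : ℝ) (hX₀ : 0 < X₀)
    (hh1 : Function.Injective (h1 Finv τ ρ)) :
    StrictMono (h1hat Finv τ ρ N X₀) ∧
    (∀ a b : ℝ, h1hat Finv τ ρ N X₀ a = 0 → h1hat Finv τ ρ N X₀ b = 0 → a = b) ∧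
    (∀ a : ℝ, h1hat Finv τ ρ N X₀ a = 0 → 0 < a) := by
  have hF : StrictMono (Fi f) := strictMono_intervalIntegral_of_pos hf hfpos 0
  have hFinv : StrictMono Finv := hF.strictMono_of_leftInverse hFinv₁
  have hFinv_cont : Continuous Finv :=
    hFinv.monotone.continuous_of_surjective fun x => ⟨Fi f x, hFinv₂ x⟩
  have hmono : StrictMono (h1hat Finv τ ρ N X₀) :=
    h1hat_strictMono (h1_strictMono hFinv hFinv_cont hρ hρ' hlt hh1) hFinv.monotone
      (strictMono_mul_one_sub_ab (hρ.differentiable one_ne_zero) hlt).monotone N X₀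
  have hneg : h1hat Finv τ ρ N X₀ 0 < 0 := by
    rw [h1hat_zero (by simpa using (hlt 0).ne)]
    exact sub_neg.mpr (hFinv hX₀)
  exact ⟨hmono, fun a b ha hb => hmono.injective (ha.trans hb.symm),
    fun a ha => hmono.lt_iff_lt.mp (ha ▸ hneg)⟩

/-- `ĥ₁` is strictly increasing; hence it has at most one zero, and any zero is positive. -/
theorem h1hat_strictMono_unique_positive_zero
    (f Finv : ℝ → ℝ) (hf : Continuous f) (hfpos : ∀ x, 0 < f x)
    (htop : Tendsto (Fi f) atTop atTop) (hbot : Tendsto (Fi f) atBot atBot)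
    (hFinv₁ : ∀ x, Fi f (Finv x) = x) (hFinv₂ : ∀ x, Finv (Fi f x) = x)
    (τ : ℝ) (hτ : 0 < τ) (ρ : ℝ → ℝ) (hρ : ContDiff ℝ 1 ρ)
    (hρ' : ∀ x, 0 < 1 - τ * deriv ρ x * x)
    (hlt : ∀ x, ab τ ρ x * (1 - τ * deriv ρ x * x) < 1)
    (N : ℕ) (hN : 1 ≤ N) (X₀ : ℝ) (hX₀ : 0 < X₀)
    (hh1 : Function.Injective (h1 Finv τ ρ)) :
    StrictMono (h1hat Finv τ ρ N X₀) ∧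
    (∀ a b : ℝ, h1hat Finv τ ρ N X₀ a = 0 → h1hat Finv τ ρ N X₀ b = 0 → a = b) ∧
    (∀ a : ℝ, h1hat Finv τ ρ N X₀ a = 0 → 0 < a) :=
  h1hat_strictMono_unique_positive_zero_general f Finv hf hfpos hFinv₁ hFinv₂ τ ρ hρ hρ' hlt N X₀
    hX₀ hh1
end

section
/- Positivity of the final order in Version 2: suppose 1 − τρ̄′(x)x > 0 for all x, the denominator k(x) := f(x) − ā(x)f(ā(x)x)(1 − τρ̄′(x)x) is strictly positive for all x, and x₀ > 0 satisfies the stationarity equation F⁻¹(X₀ − N[x₀ − F(ā(F⁻¹(x₀))·F⁻¹(x₀))]) = h₂(F⁻¹(x₀)). Setting D₀⁺ := F⁻¹(x₀) and x_N := X₀ − x₀ − (N − 1)·[x₀ − F(ā(D₀⁺)·D₀⁺)], one has F⁻¹(F(ā(D₀⁺)D₀⁺) + x_N) > D₀⁺ > ā(D₀⁺)D₀⁺, and in particular x_N > 0. -/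
open Real Filter

/-- Positivity of the final order in Version 2. -/
theorem final_order_positive_v2
    (f Finv : ℝ → ℝ) (hf : Continuous f) (hfpos : ∀ x, 0 < f x)
    (htop : Tendsto (Fi f) atTop atTop) (hbot : Tendsto (Fi f) atBot atBot)
    (hFinv₁ : ∀ x, Fi f (Finv x) = x) (hFinv₂ : ∀ x, Finv (Fi f x) = x)
    (τ : ℝ) (hτ : 0 < τ) (ρ : ℝ → ℝ) (hρ : ContDiff ℝ 1 ρ) (hρpos : ∀ x, 0 < ρ x)
    (hρ' : ∀ x, 0 < 1 - τ * deriv ρ x * x)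
    (hden : ∀ x, 0 < f x - ab τ ρ x * f (ab τ ρ x * x) * (1 - τ * deriv ρ x * x))
    (N : ℕ) (hN : 1 ≤ N) (X₀ : ℝ) (hX₀ : 0 < X₀)
    (x₀ : ℝ) (hx₀pos : 0 < x₀)
    (hx₀ : Finv (X₀ - (N : ℝ) * (x₀ - Fi f (ab τ ρ (Finv x₀) * Finv x₀))) =
      h2 f τ ρ (Finv x₀)) :
    ab τ ρ (Finv x₀) * Finv x₀ < Finv x₀ ∧
    Finv x₀ < Finv (Fi f (ab τ ρ (Finv x₀) * Finv x₀) +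
      (X₀ - x₀ - ((N : ℝ) - 1) * (x₀ - Fi f (ab τ ρ (Finv x₀) * Finv x₀)))) ∧
    0 < X₀ - x₀ - ((N : ℝ) - 1) * (x₀ - Fi f (ab τ ρ (Finv x₀) * Finv x₀)) := by
  have hFi0 : Fi f 0 = 0 := intervalIntegral.integral_same
  have hint : ∀ a b : ℝ, IntervalIntegrable f MeasureTheory.volume a b :=
    fun a b => hf.intervalIntegrable a b
  have hmono : StrictMono (Fi f) := by
    intro a b hab
    have h1 : Fi f a + ∫ y in a..b, f y = Fi f b :=
      intervalIntegral.integral_add_adjacent_intervals (hint 0 a) (hint a b)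
    have h2 : 0 < ∫ y in a..b, f y :=
      intervalIntegral.intervalIntegral_pos_of_pos (hint a b) (fun x => hfpos x) hab
    show Fi f a < Fi f b
    linarith
  set D := Finv x₀ with hD
  have hFiD : Fi f D = x₀ := hFinv₁ x₀
  have hDpos : 0 < D := hmono.lt_iff_lt.mp (by rw [hFi0, hFiD]; exact hx₀pos)
  set A := ab τ ρ D with hA
  have hApos : 0 < A := Real.exp_pos _
  have hA1 : A < 1 := by
    have : -(τ * ρ D) < 0 := by nlinarith [hρpos D]
    exact Real.exp_lt_one_iff.mpr this
  have hAD : A * D < D := by nlinarith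
  have hc : 0 < x₀ - Fi f (A * D) := by
    have := hmono hAD
    rw [hFiD] at this
    linarith
  -- h₂(D) > D
  have hh2 : D < h2 f τ ρ D := by
    have hg : 0 < f (A * D) := hfpos _
    have hs : 0 < 1 - τ * deriv ρ D * D := hρ' D
    have hden' : 0 < f D - A * f (A * D) * (1 - τ * deriv ρ D * D) := hden D
    have hlt : f D - A * f (A * D) * (1 - τ * deriv ρ D * D) <
        f D - A ^ 2 * f (A * D) * (1 - τ * deriv ρ D * D) := by
      nlinarith [mul_pos (mul_pos (mul_pos hApos hg) hs) (sub_pos.mpr hA1)]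
    have hratio : 1 < (f D - A ^ 2 * f (A * D) * (1 - τ * deriv ρ D * D)) /
        (f D - A * f (A * D) * (1 - τ * deriv ρ D * D)) :=
      (one_lt_div hden').mpr hlt
    have : D * 1 < D * ((f D - A ^ 2 * f (A * D) * (1 - τ * deriv ρ D * D)) /
        (f D - A * f (A * D) * (1 - τ * deriv ρ D * D))) :=
      (mul_lt_mul_iff_right₀ hDpos).mpr hratio
    simpa [h2, ← hA] using this
  have hkey : x₀ < X₀ - (N : ℝ) * (x₀ - Fi f (A * D)) := by
    have h1 : Fi f (Finv (X₀ - (N : ℝ) * (x₀ - Fi f (A * D)))) =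
        X₀ - (N : ℝ) * (x₀ - Fi f (A * D)) := hFinv₁ _
    rw [hx₀] at h1
    have h2 : Fi f D < Fi f (h2 f τ ρ D) := hmono hh2
    rw [hFiD, h1] at h2
    exact h2
  refine ⟨hAD, ?_, by linarith⟩
  have hlt2 : Fi f D < Fi f (A * D) +
      (X₀ - x₀ - ((N : ℝ) - 1) * (x₀ - Fi f (A * D))) := by
    rw [hFiD]; ring_nf; ring_nf at hkey; linarith
  have h3 : Fi f D < Fi f (Finv (Fi f (A * D) +
      (X₀ - x₀ - ((N : ℝ) - 1) * (x₀ - Fi f (A * D))))) := by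
    rw [hFinv₁ (Fi f (A * D) + (X₀ - x₀ - ((N : ℝ) - 1) * (x₀ - Fi f (A * D))))]
    exact hlt2
  exact hmono.lt_iff_lt.mp h3
end
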